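/- Let d ≥ 2 and let U be a real d×d special orthogonal matrix (UᵀU = I and det U = 1). Then there exists a family of angles θ = (θ_{i,j})_{1≤i<j≤d} with 0 ≤ θ_{1,j} < 2π for all j > 1 and 0 ≤ θ_{i,j} < π for all i ≠ 1, such that U = U(θ), where U(θ) is the ordered product of Givens rotations U(θ) = Q^{d−1}(θ)·Q^{d−2}(θ)···Q^1(θ). -/

import Mathlib

open Matrix Real

/-- The `d×d` Givens rotation matrix `Q_{i,j}(θ)`: the identity matrix with entries
`(i,i)` and `(j,j)` replaced by `cos θ`, entry `(i,j)` replaced by `sin θ`, and entry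
`(j,i)` replaced by `−sin θ`. -/
noncomputable def givens (d : ℕ) (i j : Fin d) (θ : ℝ) : Matrix (Fin d) (Fin d) ℝ :=
  Matrix.of fun k l =>
    if k = i ∧ l = i then Real.cos θ
    else if k = j ∧ l = j then Real.cos θ
    else if k = i ∧ l = j then Real.sin θ
    else if k = j ∧ l = i then -Real.sin θ
    else if k = l then 1 else 0

/-- `Q^k(θ) = Q_{k,d}(θ_{k,d}) · Q_{k,d−1}(θ_{k,d−1}) ··· Q_{k,k+1}(θ_{k,k+1})`
(indices `0,…,d−1` here play the role of the paper's `1,…,d`):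
the ordered product of the Givens rotations in row `k`, with the column index
decreasing from left to right. -/
noncomputable def Qmat (d : ℕ) (θ : Fin d → Fin d → ℝ) (k : Fin d) :
    Matrix (Fin d) (Fin d) ℝ :=
  ((((List.finRange d).filter (fun j => k < j)).reverse).map
    (fun j => givens d k j (θ k j))).prod

/-- `U(θ) = Q^{d−1}(θ) · Q^{d−2}(θ) ··· Q^1(θ)` (in the 0-indexed convention,
`Q^{d-1} ··· Q^0`, where the extra leftmost factor is the empty product `I`). -/
noncomputable def Umat (d : ℕ) (θ : Fin d → Fin d → ℝ) : Matrix (Fin d) (Fin d) ℝ :=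
  (((List.finRange d).reverse).map (fun k => Qmat d θ k)).prod

/-- Membership in the parameter set `Θ`: a family of angles `θ = (θ_{i,j})_{i<j}`
(encoded as a function on all pairs, set to `0` on irrelevant pairs `i ≥ j`)
with `0 ≤ θ_{1,j} < 2π` for the first row and `0 ≤ θ_{i,j} < π` otherwise. -/
def memTheta (d : ℕ) (θ : Fin d → Fin d → ℝ) : Prop :=
  ∀ i j : Fin d,
    (i < j → 0 ≤ θ i j ∧
      (if (i : ℕ) = 0 then θ i j < 2 * Real.pi else θ i j < Real.pi)) ∧
    (¬ i < j → θ i j = 0)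

/-!
A Givens QL sweep. For `k = d - 2, …, 1` the rotations of row `k` are chosen, from the last
column inwards, so that `(Q^k)ᵀ` clears the entries of row `k` right of the diagonal against
the diagonal pivots of the rows below. Clearing the entry `(k, c)` only prescribes the line
spanned by `(N c c, N k c)`, not its orientation, so every such angle can be taken in `[0, π)`:
no sign has to be corrected, and the sweep works for any matrix. What is left,
`R = (Q^{d-1} ⋯ Q^1)ᵀ U`, is special orthogonal and lower triangular in the rows `≥ 1`. Working
from the last column inwards, each column `c ≥ 1` of what remains therefore lies in the plane of
`e_0` and `e_c`, and is rotated onto `e_c` by an angle in `[0, 2π)`. This exhibits `R` as `Q^0`;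
the last entry left is `R 0 0 = det R = 1`.
-/

open Set

variable {d : ℕ}

theorem givens_mul_apply {i j : Fin d} (hij : i ≠ j) (θ : ℝ) (A : Matrix (Fin d) (Fin d) ℝ)
    (a b : Fin d) :
    (givens d i j θ * A) a b =
      if a = i then cos θ * A i b + sin θ * A j b
      else if a = j then -sin θ * A i b + cos θ * A j b
      else A a b := by
  have hrow : ∀ c, givens d i j θ a c =
      if a = i then cos θ * (1 : Matrix (Fin d) (Fin d) ℝ) i c + sin θ * (1 : Matrix _ _ ℝ) j c
      else if a = j then -sin θ * (1 : Matrix _ _ ℝ) i c + cos θ * (1 : Matrix _ _ ℝ) j c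
      else (1 : Matrix _ _ ℝ) a c := by
    intro c
    simp only [givens, of_apply, one_apply]
    grind
  simp only [mul_apply, hrow]
  split_ifs <;> simp [add_mul, Finset.sum_add_distrib, one_apply]

theorem givens_transpose (i j : Fin d) (θ : ℝ) : (givens d i j θ)ᵀ = givens d i j (-θ) := by
  ext a b
  simp only [transpose_apply, givens, of_apply, cos_neg, sin_neg, neg_neg]
  grind

theorem transpose_givens_mul_apply {i j : Fin d} (hij : i ≠ j) (θ : ℝ)
    (A : Matrix (Fin d) (Fin d) ℝ) (a b : Fin d) :
    ((givens d i j θ)ᵀ * A) a b =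
      if a = i then cos θ * A i b - sin θ * A j b
      else if a = j then sin θ * A i b + cos θ * A j b
      else A a b := by
  rw [givens_transpose, givens_mul_apply hij, cos_neg, sin_neg]
  ring_nf

theorem givens_zero (i j : Fin d) : givens d i j 0 = 1 := by
  ext a b
  simp only [givens, of_apply, cos_zero, sin_zero, neg_zero, one_apply]
  grind

theorem givens_mul_givens {i j : Fin d} (hij : i ≠ j) (α β : ℝ) :
    givens d i j α * givens d i j β = givens d i j (α + β) := by
  ext a b
  rw [givens_mul_apply hij]
  by_cases hbi : b = i <;> by_cases hbj : b = j <;> by_cases hai : a = i <;>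
    by_cases haj : a = j <;> simp_all [givens, cos_add, sin_add, eq_comm] <;> ring

theorem transpose_givens_mul_self {i j : Fin d} (hij : i ≠ j) (θ : ℝ) :
    (givens d i j θ)ᵀ * givens d i j θ = 1 := by
  rw [givens_transpose, givens_mul_givens hij, neg_add_cancel, givens_zero]

theorem det_givens {i j : Fin d} (hij : i ≠ j) (θ : ℝ) : (givens d i j θ).det = 1 := by
  have hsq : 0 ≤ (givens d i j θ).det := by
    rw [← add_halves θ, ← givens_mul_givens hij, det_mul]
    exact mul_self_nonneg _
  have hunit := congrArg det (transpose_givens_mul_self hij θ)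
  rw [det_mul, det_transpose, det_one] at hunit
  nlinarith

theorem mem_specialOrthogonalGroup_iff_transpose_mul_self {n R : Type*} [Fintype n]
    [DecidableEq n] [CommRing R] {A : Matrix n n R} :
    A ∈ specialOrthogonalGroup n R ↔ Aᵀ * A = 1 ∧ A.det = 1 := by
  rw [mem_specialOrthogonalGroup_iff, mem_orthogonalGroup_iff']

theorem transpose_mem_specialOrthogonalGroup {n R : Type*} [Fintype n] [DecidableEq n]
    [CommRing R] {A : Matrix n n R} (hA : A ∈ specialOrthogonalGroup n R) :
    Aᵀ ∈ specialOrthogonalGroup n R := by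
  rw [mem_specialOrthogonalGroup_iff_transpose_mul_self] at hA ⊢
  exact ⟨by rw [transpose_transpose, mul_eq_one_comm.mp hA.1], by rw [det_transpose, hA.2]⟩

theorem givens_mem_specialOrthogonalGroup {i j : Fin d} (hij : i ≠ j) (θ : ℝ) :
    givens d i j θ ∈ specialOrthogonalGroup (Fin d) ℝ :=
  mem_specialOrthogonalGroup_iff_transpose_mul_self.mpr
    ⟨transpose_givens_mul_self hij θ, det_givens hij θ⟩

theorem row_eq_one_of_col_eq_one {R : Matrix (Fin d) (Fin d) ℝ} (hR : Rᵀ * R = 1) {c : Fin d}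
    (hcol : ∀ a, R a c = (1 : Matrix (Fin d) (Fin d) ℝ) a c) (b : Fin d) :
    R c b = (1 : Matrix (Fin d) (Fin d) ℝ) c b := by
  simpa [mul_apply, hcol, one_apply] using congr_fun (congr_fun hR c) b

theorem col_eq_one_of_row_eq_one {R : Matrix (Fin d) (Fin d) ℝ} (hR : R * Rᵀ = 1) {c : Fin d}
    (hrow : ∀ b, R c b = (1 : Matrix (Fin d) (Fin d) ℝ) c b) (a : Fin d) :
    R a c = (1 : Matrix (Fin d) (Fin d) ℝ) a c := by
  simpa [mul_apply, hrow, one_apply, eq_comm] using congr_fun (congr_fun hR a) c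

theorem exists_angle_mem_Ico_cos_sin {x y : ℝ} (h : x ^ 2 + y ^ 2 = 1) :
    ∃ φ ∈ Ico 0 (2 * π), cos φ = x ∧ sin φ = y := by
  obtain ⟨θ, hθ⟩ := (Complex.norm_eq_one_iff ⟨x, y⟩).mp (by
    rw [Complex.norm_def, Complex.normSq_mk, ← sq, ← sq, h, sqrt_one])
  refine ⟨toIcoMod two_pi_pos 0 θ, by simpa using toIcoMod_mem_Ico two_pi_pos 0 θ, ?_, ?_⟩
  · rw [toIcoMod, cos_periodic.sub_zsmul_eq, ← Complex.exp_ofReal_mul_I_re, hθ]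
  · rw [toIcoMod, sin_periodic.sub_zsmul_eq, ← Complex.exp_ofReal_mul_I_im, hθ]

theorem exists_angle_mem_Ico_cos_mul_eq_sin_mul (u v : ℝ) :
    ∃ θ ∈ Ico 0 π, cos θ * u = sin θ * v := by
  rcases eq_or_ne u 0 with rfl | hu
  · exact ⟨0, ⟨le_rfl, pi_pos⟩, by simp⟩
  refine ⟨π / 2 - arctan (v / u), ⟨?_, ?_⟩, ?_⟩
  · linarith [arctan_lt_pi_div_two (v / u)]
  · linarith [neg_pi_div_two_lt_arctan (v / u)]
  · rw [cos_pi_div_two_sub, sin_pi_div_two_sub, sin_arctan, cos_arctan]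
    field_simp

theorem List.prod_map_eq_prod_map_mul {M α : Type*} [Monoid M] [LinearOrder α] {f g : α → M}
    {c : α} (hgf : ∀ x, c < x → g x = f x) (hf : ∀ x ≤ c, f x = 1) (hg : ∀ x < c, g x = 1) :
    ∀ {l : List α}, l.Pairwise (· > ·) → c ∈ l → (l.map g).prod = (l.map f).prod * g c
  | [], _, hc => absurd hc List.not_mem_nil
  | x :: t, hl, hc => by
    rw [List.pairwise_cons] at hl
    simp only [List.map_cons, List.prod_cons]
    rcases eq_or_ne x c with rfl | hxc
    · rw [List.prod_eq_one (by simpa using fun y hy => hg y (hl.1 y hy)),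
        List.prod_eq_one (by simpa using fun y hy => hf y (hl.1 y hy).le), hf x le_rfl]
      simp
    · have hct : c ∈ t := (List.mem_cons.mp hc).resolve_left (Ne.symm hxc)
      rw [hgf x (hl.1 c hct), List.prod_map_eq_prod_map_mul hgf hf hg hl.2 hct, mul_assoc]

def colsAbove (k : Fin d) : List (Fin d) :=
  ((List.finRange d).filter (fun j => k < j)).reverse

theorem mem_colsAbove {k j : Fin d} : j ∈ colsAbove k ↔ k < j := by
  simp [colsAbove]

theorem pairwise_colsAbove (k : Fin d) : (colsAbove k).Pairwise (· > ·) :=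
  List.pairwise_reverse.mpr ((List.sortedLT_finRange d).pairwise.filter _)

noncomputable def givensRowProd (k : Fin d) (l : List (Fin d)) (η : Fin d → ℝ) :
    Matrix (Fin d) (Fin d) ℝ :=
  (l.map fun c => givens d k c (η c)).prod

theorem Qmat_eq_givensRowProd (θ : Fin d → Fin d → ℝ) (k : Fin d) :
    Qmat d θ k = givensRowProd k (colsAbove k) (θ k) :=
  rfl

theorem givensRowProd_congr {k : Fin d} {l : List (Fin d)} {η η' : Fin d → ℝ}
    (h : ∀ c ∈ l, η c = η' c) : givensRowProd k l η = givensRowProd k l η' := by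
  simp only [givensRowProd]
  congr 1
  exact List.map_congr_left fun c hc => by rw [h c hc]

theorem givensRowProd_cons_update {k c : Fin d} {l : List (Fin d)} (hc : c ∉ l)
    (η : Fin d → ℝ) (θ : ℝ) :
    givensRowProd k (c :: l) (Function.update η c θ) = givens d k c θ * givensRowProd k l η := by
  simp only [givensRowProd, List.map_cons, List.prod_cons, Function.update_self]
  congr 2
  exact List.map_congr_left fun x hx => by rw [Function.update_of_ne (ne_of_mem_of_not_mem hx hc)]

theorem givensRowProd_mem_specialOrthogonalGroup {k : Fin d} {l : List (Fin d)}
    (hl : ∀ c ∈ l, k < c) (η : Fin d → ℝ) :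
    givensRowProd k l η ∈ specialOrthogonalGroup (Fin d) ℝ :=
  list_prod_mem (by simpa using fun c hc => givens_mem_specialOrthogonalGroup (hl c hc).ne _)

theorem Umat_mem_specialOrthogonalGroup (θ : Fin d → Fin d → ℝ) :
    Umat d θ ∈ specialOrthogonalGroup (Fin d) ℝ :=
  list_prod_mem <| by
    simpa [Qmat_eq_givensRowProd] using
      fun k => givensRowProd_mem_specialOrthogonalGroup (fun _ => mem_colsAbove.mp) (θ k)

theorem Qmat_of_row_eq_zero {θ : Fin d → Fin d → ℝ} {k : Fin d} (h : θ k = 0) :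
    Qmat d θ k = 1 :=
  List.prod_eq_one (by simp [h, givens_zero])

theorem Umat_update_row {θ : Fin d → Fin d → ℝ} {k : Fin d} (hθ : ∀ i ≤ k, θ i = 0)
    (η : Fin d → ℝ) :
    Umat d (Function.update θ k η) = Umat d θ * givensRowProd k (colsAbove k) η := by
  have hlt : ∀ i < k, Function.update θ k η i = 0 := fun i hi => by
    rw [Function.update_of_ne hi.ne, hθ i hi.le]
  have hgt : ∀ i, k < i → Qmat d (Function.update θ k η) i = Qmat d θ i := fun i hi => by
    rw [Qmat_eq_givensRowProd, Qmat_eq_givensRowProd, Function.update_of_ne hi.ne']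
  have h := List.prod_map_eq_prod_map_mul hgt (fun i hi => Qmat_of_row_eq_zero (hθ i hi))
    (fun i hi => Qmat_of_row_eq_zero (hlt i hi))
    (List.pairwise_reverse.mpr (List.sortedLT_finRange d).pairwise) (List.mem_reverse.mpr
      (List.mem_finRange k))
  rwa [Qmat_eq_givensRowProd, Function.update_self] at h

def IsLowerTriangularFrom (k : ℕ) (N : Matrix (Fin d) (Fin d) ℝ) : Prop :=
  ∀ a b : Fin d, k ≤ (a : ℕ) → a < b → N a b = 0

/-- `l` lists, right to left, the columns of row `k` still to be cleared; the other columns right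
of `k` are already clear and lie right of all of `l`. -/
theorem exists_givensRowProd_transpose_mul_isLowerTriangularFrom (k : Fin d) :
    ∀ (l : List (Fin d)) (N : Matrix (Fin d) (Fin d) ℝ), l.Pairwise (· > ·) →
      (∀ c ∈ l, k < c) → (∀ b, k < b → b ∉ l → ∀ c ∈ l, c < b) →
      IsLowerTriangularFrom (k + 1) N → (∀ b, k < b → b ∉ l → N k b = 0) →
      ∃ η : Fin d → ℝ, (∀ c, η c ∈ Ico 0 π) ∧
        IsLowerTriangularFrom k ((givensRowProd k l η)ᵀ * N)
  | [], N, _, _, _, hN, hNk => by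
    refine ⟨0, fun _ => ⟨le_rfl, pi_pos⟩, fun a b ha hab => ?_⟩
    simp only [givensRowProd, List.map_nil, List.prod_nil, transpose_one, one_mul]
    rcases ha.eq_or_lt with ha | ha
    · obtain rfl : k = a := Fin.ext ha
      exact hNk b hab List.not_mem_nil
    · exact hN a b ha hab
  | c :: t, N, hl, hlk, hgap, hN, hNk => by
    rw [List.pairwise_cons] at hl
    have hkc : k < c := hlk c List.mem_cons_self
    have hct : c ∉ t := fun hc => lt_irrefl c (hl.1 c hc)
    obtain ⟨θ, hθ, hθN⟩ := exists_angle_mem_Ico_cos_mul_eq_sin_mul (N k c) (N c c)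
    have hN' := transpose_givens_mul_apply hkc.ne θ N
    have hgap' : ∀ b, k < b → b ∉ t → ∀ x ∈ t, x < b := by
      intro b hkb hbt x hx
      rcases eq_or_ne b c with rfl | hbc
      · exact hl.1 x hx
      · exact hgap b hkb (by simp [hbc, hbt]) x (List.mem_cons_of_mem c hx)
    have hlower : IsLowerTriangularFrom (k + 1) ((givens d k c θ)ᵀ * N) := by
      intro a b ha hab
      have hak : a ≠ k := fun h => by simp [h] at ha
      rw [hN', if_neg hak]
      split_ifs with hac
      · subst hac
        have hbl : b ∉ a :: t := by simpa [hab.ne'] using fun h => lt_asymm hab (hl.1 b h)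
        rw [hNk b (hkc.trans hab) hbl, hN a b (by simpa using hkc) hab]
        ring
      · exact hN a b ha hab
    have hrow : ∀ b, k < b → b ∉ t → ((givens d k c θ)ᵀ * N) k b = 0 := by
      intro b hkb hbt
      rw [hN', if_pos rfl]
      rcases eq_or_ne b c with rfl | hbc
      · linarith
      · have hbl : b ∉ c :: t := by simp [hbc, hbt]
        rw [hNk b hkb hbl, hN c b (by simpa using hkc) (hgap b hkb hbl c List.mem_cons_self)]
        ring
    obtain ⟨η, hη, hηN⟩ := exists_givensRowProd_transpose_mul_isLowerTriangularFrom k t _ hl.2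
      (fun x hx => hlk x (List.mem_cons_of_mem c hx)) hgap' hlower hrow
    refine ⟨Function.update η c θ, fun x => ?_, ?_⟩
    · rcases eq_or_ne x c with rfl | hxc
      · simpa using hθ
      · simpa [hxc] using hη x
    · rwa [givensRowProd_cons_update hct, transpose_mul, mul_assoc]

theorem exists_Umat_transpose_mul_isLowerTriangularFrom (M : Matrix (Fin d) (Fin d) ℝ) {k : ℕ}
    (hk : k ≤ d) :
    ∃ θ : Fin d → Fin d → ℝ, (∀ i j : Fin d, (i : ℕ) < k ∨ j ≤ i → θ i j = 0) ∧
      (∀ i j, θ i j ∈ Ico 0 π) ∧ IsLowerTriangularFrom k ((Umat d θ)ᵀ * M) := by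
  induction hk using Nat.decreasingInduction with
  | self =>
    exact ⟨0, fun _ _ _ => rfl, fun _ _ => ⟨le_rfl, pi_pos⟩, fun a _ ha => absurd a.isLt (by omega)⟩
  | of_succ k hk ih =>
    obtain ⟨θ', hθ'0, hθ', hlow⟩ := ih
    set kf : Fin d := ⟨k, hk⟩
    obtain ⟨η, hη, hηN⟩ := exists_givensRowProd_transpose_mul_isLowerTriangularFrom kf
      (colsAbove kf) _ (pairwise_colsAbove kf) (fun _ => mem_colsAbove.mp)
      (fun _ hb hb' => absurd (mem_colsAbove.mpr hb) hb') hlow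
      (fun _ hb hb' => absurd (mem_colsAbove.mpr hb) hb')
    have hθ'kf : ∀ i ≤ kf, θ' i = 0 := fun i (hi : (i : ℕ) ≤ k) =>
      funext fun j => hθ'0 i j (.inl (by omega))
    refine ⟨Function.update θ' kf fun j => if kf < j then η j else 0, fun i j hij => ?_,
      fun i j => ?_, ?_⟩
    · rcases eq_or_ne i kf with rfl | hi
      · rw [Function.update_self]
        exact if_neg (hij.elim (absurd · (lt_irrefl k)) not_lt.mpr)
      · rw [Function.update_of_ne hi]
        exact hθ'0 i j (hij.imp (by omega) id)
    · rcases eq_or_ne i kf with rfl | hi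
      · simp only [Function.update_self]
        split_ifs
        exacts [hη j, ⟨le_rfl, pi_pos⟩]
      · simpa [Function.update_of_ne hi] using hθ' i j
    · rwa [Umat_update_row hθ'kf,
        givensRowProd_congr fun c hc => if_pos (mem_colsAbove.mp hc), transpose_mul, mul_assoc]

theorem exists_angle_transpose_givens_mul_apply_eq_one {R : Matrix (Fin d) (Fin d) ℝ}
    (hR : Rᵀ * R = 1) {p c : Fin d} (hpc : p ≠ c) (hcol : ∀ a, a ≠ p → a ≠ c → R a c = 0) :
    ∃ φ ∈ Ico 0 (2 * π),
      ∀ a, ((givens d p c φ)ᵀ * R) a c = (1 : Matrix (Fin d) (Fin d) ℝ) a c := by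
  have hunit : R c c ^ 2 + R p c ^ 2 = 1 := by
    have h := congr_fun (congr_fun hR c) c
    rw [mul_apply, Fintype.sum_eq_add p c hpc (fun a ha => by simp [hcol a ha.1 ha.2]),
      one_apply_eq] at h
    simp only [transpose_apply] at h
    linarith
  obtain ⟨φ, hφ, hcos, hsin⟩ := exists_angle_mem_Ico_cos_sin hunit
  refine ⟨φ, hφ, fun a => ?_⟩
  rw [transpose_givens_mul_apply hpc]
  split_ifs with hap hac
  · rw [hap, one_apply_ne hpc, hcos, hsin]
    ring
  · rw [hac, one_apply_eq, hcos, hsin]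
    linarith
  · rw [hcol a hap hac, one_apply_ne hac]

theorem exists_angles_eq_givensRowProd (p : Fin d) :
    ∀ (l : List (Fin d)) (R : Matrix (Fin d) (Fin d) ℝ), l.Pairwise (· > ·) →
      (∀ c ∈ l, p < c) → R ∈ specialOrthogonalGroup (Fin d) ℝ →
      IsLowerTriangularFrom (p + 1) R →
      (∀ a, a ≠ p → a ∉ l → ∀ b, R a b = (1 : Matrix (Fin d) (Fin d) ℝ) a b) →
      ∃ φ : Fin d → ℝ, (∀ c, φ c ∈ Ico 0 (2 * π)) ∧ R = givensRowProd p l φ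
  | [], R, _, _, hR, _, hfix => by
    have hfix' : ∀ a, a ≠ p → ∀ b, R a b = (1 : Matrix (Fin d) (Fin d) ℝ) a b :=
      fun a ha => hfix a ha List.not_mem_nil
    have hoff : ∀ a b, a ≠ b → R a b = 0 := by
      intro a b hab
      rcases eq_or_ne a p with rfl | hap
      · rw [col_eq_one_of_row_eq_one (mul_eq_one_comm.mp
          (mem_specialOrthogonalGroup_iff_transpose_mul_self.mp hR).1) (hfix' b hab.symm),
          one_apply_ne hab]
      · rw [hfix' a hap, one_apply_ne hab]
    have hpp : R p p = 1 := by
      have hdet := (mem_specialOrthogonalGroup_iff_transpose_mul_self.mp hR).2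
      rwa [det_of_isUpperTriangular (fun a b hab => hoff a b hab.ne'),
        Finset.prod_eq_single p (fun a _ hap => by rw [hfix' a hap, one_apply_eq])
          (by simp)] at hdet
    refine ⟨0, fun _ => ⟨le_rfl, by positivity⟩, ?_⟩
    ext a b
    simp only [givensRowProd, List.map_nil, List.prod_nil]
    rcases eq_or_ne a b with rfl | hab
    · rcases eq_or_ne a p with rfl | hap
      · rw [hpp, one_apply_eq]
      · exact hfix' a hap a
    · rw [hoff a b hab, one_apply_ne hab]
  | c :: t, R, hl, hlp, hR, hlow, hfix => by
    rw [List.pairwise_cons] at hl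
    have hpc : p < c := hlp c List.mem_cons_self
    have hct : c ∉ t := fun hc => lt_irrefl c (hl.1 c hc)
    have hcol : ∀ a, a ≠ p → a ≠ c → R a c = 0 := by
      intro a hap hac
      by_cases hal : a ∈ c :: t
      · exact hlow a c (hlp a hal) (hl.1 a ((List.mem_cons.mp hal).resolve_left hac))
      · rw [hfix a hap hal, one_apply_ne hac]
    obtain ⟨φ, hφ, hcol'⟩ := exists_angle_transpose_givens_mul_apply_eq_one
      (mem_specialOrthogonalGroup_iff_transpose_mul_self.mp hR).1 hpc.ne hcol
    have hR' : (givens d p c φ)ᵀ * R ∈ specialOrthogonalGroup (Fin d) ℝ :=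
      mul_mem (transpose_mem_specialOrthogonalGroup (givens_mem_specialOrthogonalGroup hpc.ne φ)) hR
    have hrow' := row_eq_one_of_col_eq_one
      (mem_specialOrthogonalGroup_iff_transpose_mul_self.mp hR').1 hcol'
    have hlow' : IsLowerTriangularFrom (p + 1) ((givens d p c φ)ᵀ * R) := by
      intro a b ha hab
      have hap : a ≠ p := fun h => by simp [h] at ha
      by_cases hac : a = c
      · rw [hac, hrow', one_apply_ne (hac ▸ hab.ne)]
      · rw [transpose_givens_mul_apply hpc.ne, if_neg hap, if_neg hac]
        exact hlow a b ha hab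
    have hfix' : ∀ a, a ≠ p → a ∉ t → ∀ b,
        ((givens d p c φ)ᵀ * R) a b = (1 : Matrix (Fin d) (Fin d) ℝ) a b := by
      intro a hap hat b
      by_cases hac : a = c
      · rw [hac, hrow']
      · rw [transpose_givens_mul_apply hpc.ne, if_neg hap, if_neg hac]
        exact hfix a hap (by simp [hac, hat]) b
    obtain ⟨ψ, hψ, hψR⟩ := exists_angles_eq_givensRowProd p t _ hl.2
      (fun x hx => hlp x (List.mem_cons_of_mem c hx)) hR' hlow' hfix'
    refine ⟨Function.update ψ c φ, fun x => ?_, ?_⟩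
    · rcases eq_or_ne x c with rfl | hxc
      · simpa using hφ
      · simpa [hxc] using hψ x
    · rw [givensRowProd_cons_update hct, ← hψR, ← mul_assoc,
        mul_eq_one_comm.mp (transpose_givens_mul_self hpc.ne φ), one_mul]

/-- every real `d×d` special orthogonal matrix `U` (i.e. `UᵀU = I` and
`det U = 1`, `d ≥ 2`) can be written as the ordered product of Givens rotations
`U = U(θ) = Q^{d−1}(θ)·Q^{d−2}(θ)···Q^1(θ)` for some family of angles `θ ∈ Θ`. -/
theorem specialOrthogonal_eq_givens_product (d : ℕ) (hd : 2 ≤ d)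
    (U : Matrix (Fin d) (Fin d) ℝ) (hU : U.transpose * U = 1) (hdet : U.det = 1) :
    ∃ θ : Fin d → Fin d → ℝ, memTheta d θ ∧ U = Umat d θ := by
  obtain ⟨θ', hθ'0, hθ', hlow⟩ :=
    exists_Umat_transpose_mul_isLowerTriangularFrom U (by omega : 1 ≤ d)
  set p : Fin d := ⟨0, by omega⟩
  have hp : ∀ a, a ≠ p → a ∈ colsAbove p := fun a ha =>
    mem_colsAbove.mpr (Fin.lt_def.mpr (Nat.pos_of_ne_zero fun h => ha (Fin.ext h)))
  have hP := Umat_mem_specialOrthogonalGroup θ'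
  obtain ⟨φ, hφ, hR⟩ := exists_angles_eq_givensRowProd p (colsAbove p) _ (pairwise_colsAbove p)
    (fun _ => mem_colsAbove.mp) (mul_mem (transpose_mem_specialOrthogonalGroup hP)
      (mem_specialOrthogonalGroup_iff_transpose_mul_self.mpr ⟨hU, hdet⟩)) hlow
    (fun a ha ha' => absurd (hp a ha) ha')
  have hθ'p : ∀ i ≤ p, θ' i = 0 := fun i (hi : (i : ℕ) ≤ 0) =>
    funext fun j => hθ'0 i j (.inl (by omega))
  refine ⟨Function.update θ' p fun j => if p < j then φ j else 0,
    fun i j => ⟨fun hij => ?_, fun hij => ?_⟩, ?_⟩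
  · rcases eq_or_ne i p with rfl | hi
    · simpa [hij, p] using hφ j
    · have hi0 : (i : ℕ) ≠ 0 := fun h => hi (Fin.ext h)
      simpa [Function.update_of_ne hi, hi0] using hθ' i j
  · rcases eq_or_ne i p with rfl | hi
    · simp [hij]
    · simpa [Function.update_of_ne hi] using hθ'0 i j (.inr (not_lt.mp hij))
  · rw [Umat_update_row hθ'p, givensRowProd_congr fun c hc => if_pos (mem_colsAbove.mp hc),
      ← hR, ← mul_assoc,
      mul_eq_one_comm.mp (mem_specialOrthogonalGroup_iff_transpose_mul_self.mp hP).1, one_mul]
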